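/- arXiv:math/0402294 — 3 statements merged into one kernel-verified Lean document; each statement's English description precedes it below -/
import Mathlib

section
/- Let n ≥ 1 and N = 2n+2. Define e := Σ_{k=3}^{2n+2} μ_{1k} ∧ μ_{2k}, and for k,l ∈ {3,…,2n+2} define Ω*_{kl} := Σ_{i=1}^{2} μ_{ik} ∧ μ_{il}. Define e* := Σ_σ sgn(σ) Ω*_{σ(3)σ(4)} ∧ Ω*_{σ(5)σ(6)} ∧ ⋯ ∧ Ω*_{σ(2n+1)σ(2n+2)}, the sum over all permutations σ of {3,…,2n+2}. Then e ∧ e* = 0 in ⋀(V). -/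
/- STATEMENT 0: In the exterior algebra of a real vector space `V`, given vectors
`μ i j` (1 ≤ i,j ≤ 2n+2, here 0-indexed) with `μ i j = -μ j i`,
`e := ∑_{k=3}^{2n+2} μ_{1k} ∧ μ_{2k}` and the Pfaffian-type sum
`e* := ∑_σ sgn σ Ω*_{σ(3)σ(4)} ∧ ⋯ ∧ Ω*_{σ(2n+1)σ(2n+2)}` satisfy `e ∧ e* = 0`. -/

variable {V : Type} [AddCommGroup V] [Module ℝ V]

/-- column embedding: `{3,…,2n+2}` (0-indexed: `k ↦ k+2`). -/
def col (n : ℕ) (k : Fin (2 * n)) : Fin (2 * n + 2) := ⟨k.1 + 2, by have := k.isLt; omega⟩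

/-- `Ω* k l = ∑_{i=1}^{2} μ_{ik} ∧ μ_{il}`, for columns `k, l ∈ {3,…,2n+2}`. -/
noncomputable def Omst (n : ℕ) (μ : Fin (2 * n + 2) → Fin (2 * n + 2) → V) (k l : Fin (2 * n)) :
    ExteriorAlgebra ℝ V :=
  ∑ i : Fin 2,
    ExteriorAlgebra.ι ℝ (μ ⟨i.1, by have := i.isLt; omega⟩ (col n k)) *
    ExteriorAlgebra.ι ℝ (μ ⟨i.1, by have := i.isLt; omega⟩ (col n l))

/-- `e = ∑_{k=3}^{2n+2} μ_{1k} ∧ μ_{2k}`. -/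
noncomputable def eform (n : ℕ) (μ : Fin (2 * n + 2) → Fin (2 * n + 2) → V) :
    ExteriorAlgebra ℝ V :=
  ∑ k : Fin (2 * n),
    ExteriorAlgebra.ι ℝ (μ ⟨0, by omega⟩ (col n k)) *
    ExteriorAlgebra.ι ℝ (μ ⟨1, by omega⟩ (col n k))

/-- `e* = ∑_{σ} sgn σ · Ω*_{σ(3)σ(4)} ∧ ⋯ ∧ Ω*_{σ(2n+1)σ(2n+2)}`. -/
noncomputable def estform (n : ℕ) (μ : Fin (2 * n + 2) → Fin (2 * n + 2) → V) :
    ExteriorAlgebra ℝ V :=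
  ∑ σ : Equiv.Perm (Fin (2 * n)), (Equiv.Perm.sign σ : ℤ) •
    (List.ofFn (fun j : Fin n =>
      Omst n μ (σ ⟨2 * j.1, by have := j.isLt; omega⟩)
              (σ ⟨2 * j.1 + 1, by have := j.isLt; omega⟩))).prod

/-! Each term of `e ∧ e*` has the form `μ_{1k} μ_{2k} ∧ Ω*_{σ(3)σ(4)} ∧ ⋯ ∧ Ω*_{σ(2n+1)σ(2n+2)}`.
Since `σ` is onto, column `k` occurs in some factor `Ω*_{kl}` or `Ω*_{lk}`, each summand of which
repeats `μ_{1k}` or `μ_{2k}`. As 2-forms commute with 2-forms, `μ_{1k} μ_{2k}` can be moved next to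
that factor, where the product vanishes. -/

open ExteriorAlgebra

theorem List.mul_prod_eq_zero_of_commute {M : Type*} [MonoidWithZero M] {a b : M} {L : List M}
    (hb : b ∈ L) (hab : a * b = 0) (hcomm : ∀ x ∈ L, Commute a x) : a * L.prod = 0 := by
  induction L with
  | nil => cases hb
  | cons c L ih =>
    rw [List.prod_cons]
    rcases List.mem_cons.mp hb with rfl | hbL
    · rw [← mul_assoc, hab, zero_mul]
    · rw [(hcomm c List.mem_cons_self).left_comm,
        ih hbL fun x hx => hcomm x (List.mem_cons_of_mem c hx), mul_zero]

theorem Fin.exists_eq_two_mul_or_eq_two_mul_add_one {n : ℕ} (m : Fin (2 * n)) :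
    ∃ j : Fin n, 2 * j.1 = m.1 ∨ 2 * j.1 + 1 = m.1 :=
  ⟨⟨m.1 / 2, by omega⟩, by dsimp only; omega⟩

namespace ExteriorAlgebra

variable {R M : Type*} [CommRing R] [AddCommGroup M] [Module R M]

theorem ι_mul_ι_anticomm (x y : M) : ι R x * ι R y = -(ι R y * ι R x) :=
  eq_neg_of_add_eq_zero_left (ι_add_mul_swap x y)

theorem commute_ι_mul_ι_ι (x y z : M) : Commute (ι R x * ι R y) (ι R z) := by
  rw [Commute, SemiconjBy, mul_assoc, ι_mul_ι_anticomm y z, mul_neg, ← mul_assoc,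
    ι_mul_ι_anticomm x z, neg_mul, neg_neg, mul_assoc]

theorem commute_ι_mul_ι (x y z w : M) : Commute (ι R x * ι R y) (ι R z * ι R w) :=
  (commute_ι_mul_ι_ι x y z).mul_right (commute_ι_mul_ι_ι x y w)

theorem ι_mul_ι_mul_ι_mul_ι_eq_zero {a b c d : M} (h : c = a ∨ c = b ∨ d = a ∨ d = b) :
    ι R a * ι R b * (ι R c * ι R d) = 0 := by
  have hv : ¬Function.Injective ![a, b, c, d] := fun hinj => by
    rcases h with h | h | h | h
    · exact absurd (@hinj 2 0 h) (by decide)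
    · exact absurd (@hinj 2 1 h) (by decide)
    · exact absurd (@hinj 3 0 h) (by decide)
    · exact absurd (@hinj 3 1 h) (by decide)
  simpa [ιMulti_apply, List.ofFn_succ, mul_assoc] using ιMulti_eq_zero_of_not_inj (R := R) hv

end ExteriorAlgebra

noncomputable def eformTerm (n : ℕ) (μ : Fin (2 * n + 2) → Fin (2 * n + 2) → V)
    (k : Fin (2 * n)) : ExteriorAlgebra ℝ V :=
  ι ℝ (μ ⟨0, by omega⟩ (col n k)) * ι ℝ (μ ⟨1, by omega⟩ (col n k))

theorem eform_eq_sum_eformTerm (n : ℕ) (μ : Fin (2 * n + 2) → Fin (2 * n + 2) → V) :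
    eform n μ = ∑ k, eformTerm n μ k :=
  rfl

theorem commute_eformTerm_Omst (n : ℕ) (μ : Fin (2 * n + 2) → Fin (2 * n + 2) → V)
    (k l l' : Fin (2 * n)) : Commute (eformTerm n μ k) (Omst n μ l l') :=
  Commute.sum_right _ _ _ fun _ _ => commute_ι_mul_ι _ _ _ _

theorem eformTerm_mul_Omst_eq_zero (n : ℕ) (μ : Fin (2 * n + 2) → Fin (2 * n + 2) → V)
    {k l l' : Fin (2 * n)} (h : l = k ∨ l' = k) : eformTerm n μ k * Omst n μ l l' = 0 := by
  rw [eformTerm, Omst, Fin.sum_univ_two, mul_add]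
  rcases h with rfl | rfl <;> simp [ι_mul_ι_mul_ι_mul_ι_eq_zero]

theorem eformTerm_mul_prod_Omst_eq_zero (n : ℕ) (μ : Fin (2 * n + 2) → Fin (2 * n + 2) → V)
    (σ : Equiv.Perm (Fin (2 * n))) (k : Fin (2 * n)) :
    eformTerm n μ k * (List.ofFn fun j : Fin n =>
      Omst n μ (σ ⟨2 * j.1, by have := j.isLt; omega⟩)
        (σ ⟨2 * j.1 + 1, by have := j.isLt; omega⟩)).prod = 0 := by
  obtain ⟨j, hj⟩ := Fin.exists_eq_two_mul_or_eq_two_mul_add_one (σ.symm k)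
  have hk : σ ⟨2 * j.1, by omega⟩ = k ∨ σ ⟨2 * j.1 + 1, by omega⟩ = k := by
    rw [← σ.apply_symm_apply k]
    rcases hj with h | h
    · exact Or.inl (congrArg σ (Fin.ext h))
    · exact Or.inr (congrArg σ (Fin.ext h))
  exact List.mul_prod_eq_zero_of_commute (List.mem_ofFn.mpr ⟨j, rfl⟩)
    (eformTerm_mul_Omst_eq_zero n μ hk)
    (List.forall_mem_ofFn_iff.mpr fun _ => commute_eformTerm_Omst n μ _ _ _)

theorem stmt_0_general (n : ℕ) (μ : Fin (2 * n + 2) → Fin (2 * n + 2) → V) :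
    eform n μ * estform n μ = 0 := by
  rw [eform_eq_sum_eformTerm, estform, Finset.sum_mul]
  refine Finset.sum_eq_zero fun k _ => ?_
  rw [Finset.mul_sum]
  refine Finset.sum_eq_zero fun σ _ => ?_
  rw [mul_smul_comm, eformTerm_mul_prod_Omst_eq_zero, smul_zero]

theorem stmt_0 (n : ℕ) (hn : 1 ≤ n) (μ : Fin (2 * n + 2) → Fin (2 * n + 2) → V)
    (hμ : ∀ i j, μ i j = - μ j i) :
    eform n μ * estform n μ = 0 :=
  stmt_0_general n μ
end

section
/- For any orthonormal vectors v₁, v₂, v₃, v₄ ∈ V (so that ξ = v₁ ∧ v₂ ∧ v₃ ∧ v₄ is a decomposable unit 4-vector), one has (ξ_{1,1,1,1} + ξ_{2,2,2,2} + ξ_{3,3,3,3} + ξ_{4,4,4,4})² ≤ 1. -/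
/- STATEMENT 4: For orthonormal `v₁,…,v₄` in `V = Fin 4 → Fin 4 → ℝ` (so that
`ξ = v₁∧v₂∧v₃∧v₄` is a decomposable unit 4-vector),
`(ξ_{1,1,1,1} + ξ_{2,2,2,2} + ξ_{3,3,3,3} + ξ_{4,4,4,4})² ≤ 1`. -/

/-- Plücker coordinate `ξ_{i₁,i₂,i₃,i₄} := det M`, `M_{ab} = (v_b)_{i_a, a}`. -/
noncomputable def xi (v : Fin 4 → (Fin 4 → Fin 4 → ℝ)) (i : Fin 4 → Fin 4) : ℝ :=
  Matrix.det (Matrix.of fun a b => v b (i a) a)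

/- The coordinate `ξ_{i,i,i,i}` is the determinant of the slice `Aᵢ = (v_b(i, a))_{a b}`.
AM–GM on the eigenvalues of `Aᵢᵀ Aᵢ` gives `|det Aᵢ| ≤ sᵢ²` with `sᵢ = ‖Aᵢ‖²_F / 4`, and the
slices share the total mass `∑ᵢ ‖Aᵢ‖²_F = ∑_b ‖v_b‖² = 4`, so `∑ sᵢ = 1`. Hence
`|∑ᵢ ξ_{i,i,i,i}| ≤ ∑ sᵢ² ≤ (∑ sᵢ)² = 1`. -/

open Finset Matrix

theorem Real.prod_le_arith_mean_pow {ι : Type*} (s : Finset ι) {z : ι → ℝ}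
    (hz : ∀ i ∈ s, 0 ≤ z i) : ∏ i ∈ s, z i ≤ ((∑ i ∈ s, z i) / #s) ^ #s := by
  rcases s.eq_empty_or_nonempty with rfl | hs
  · simp
  have hn : (0 : ℝ) < #s := mod_cast hs.card_pos
  have hamgm := Real.geom_mean_le_arith_mean_weighted s (fun _ ↦ (#s : ℝ)⁻¹) z
    (fun _ _ ↦ by positivity) (by simp [hn.ne']) hz
  calc ∏ i ∈ s, z i = (∏ i ∈ s, z i ^ (#s : ℝ)⁻¹) ^ #s := by
        rw [← prod_pow]
        refine prod_congr rfl fun i hi ↦ ?_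
        rw [← Real.rpow_natCast, ← Real.rpow_mul (hz i hi), inv_mul_cancel₀ hn.ne', Real.rpow_one]
    _ ≤ (∑ i ∈ s, (#s : ℝ)⁻¹ * z i) ^ #s :=
        pow_le_pow_left₀ (prod_nonneg fun i hi ↦ Real.rpow_nonneg (hz i hi) _) hamgm _
    _ = ((∑ i ∈ s, z i) / #s) ^ #s := by rw [← mul_sum, inv_mul_eq_div]

theorem Matrix.trace_transpose_mul_self {m n R : Type*} [Fintype m] [Fintype n] [CommSemiring R]
    (A : Matrix m n R) : (Aᵀ * A).trace = ∑ i, ∑ j, A i j ^ 2 := by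
  simp only [trace, diag, mul_apply, transpose_apply, sq]
  exact sum_comm

theorem Matrix.det_sq_le_sum_sq_div_card_pow {n : Type*} [Fintype n] [DecidableEq n]
    (A : Matrix n n ℝ) :
    A.det ^ 2 ≤ ((∑ i, ∑ j, A i j ^ 2) / Fintype.card n) ^ Fintype.card n := by
  have hA : (Aᵀ * A).PosSemidef := by simpa using posSemidef_conjTranspose_mul_self A
  calc A.det ^ 2 = (Aᵀ * A).det := by rw [det_mul, det_transpose, sq]
    _ = ∏ i, hA.isHermitian.eigenvalues i := by simpa using hA.isHermitian.det_eq_prod_eigenvalues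
    _ ≤ ((∑ i, hA.isHermitian.eigenvalues i) / #univ) ^ #univ :=
        Real.prod_le_arith_mean_pow _ fun i _ ↦ hA.eigenvalues_nonneg i
    _ = _ := by
        rw [← trace_transpose_mul_self, hA.isHermitian.trace_eq_sum_eigenvalues]
        simp

theorem stmt_4 (v : Fin 4 → (Fin 4 → Fin 4 → ℝ))
    (hv : ∀ a b, (∑ i : Fin 4, ∑ k : Fin 4, v a i k * v b i k) = if a = b then 1 else 0) :
    (∑ i : Fin 4, xi v (fun _ => i)) ^ 2 ≤ 1 := by
  set s : Fin 4 → ℝ := fun i ↦ (∑ a, ∑ b, v b i a ^ 2) / 4 with hs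
  have hs_nonneg : ∀ i, 0 ≤ s i := fun i ↦ by positivity
  have hs_sum : ∑ i, s i = 1 := by
    have hunit : ∀ b, ∑ i, ∑ a, v b i a ^ 2 = 1 := fun b ↦ by simpa [sq] using hv b b
    rw [hs, ← sum_div, div_eq_one_iff_eq four_ne_zero, sum_congr rfl fun i _ ↦ sum_comm, sum_comm]
    simp [hunit]
  have hxi : ∀ i, |xi v fun _ ↦ i| ≤ s i ^ 2 := fun i ↦ by
    refine abs_le_of_sq_le_sq ?_ (sq_nonneg _)
    rw [← pow_mul]
    exact det_sq_le_sum_sq_div_card_pow (of fun a b ↦ v b i a)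
  rw [sq_le_one_iff_abs_le_one]
  calc |∑ i, xi v fun _ ↦ i| ≤ ∑ i, |xi v fun _ ↦ i| := abs_sum_le_sum_abs _ _
    _ ≤ ∑ i, s i ^ 2 := sum_le_sum fun i _ ↦ hxi i
    _ ≤ (∑ i, s i) ^ 2 := sum_sq_le_sq_sum_of_nonneg fun i _ ↦ hs_nonneg i
    _ = 1 := by rw [hs_sum, one_pow]
end

section
/- Let u, v be orthonormal vectors in ℂ² regarded as a real inner product space (with ⟨x,y⟩ = Re⟨x,y⟩_ℂ), and let a, b ∈ ℂ² be such that (a, ia, b, ib) is an orthonormal ℝ-basis of ℂ² (i.e., a, b span orthogonal complex lines). Define D(x,y) := ⟨u,x⟩⟨v,y⟩ − ⟨u,y⟩⟨v,x⟩. Then D(a, ia) + D(b, ib) = 1 if and only if v = iu (i.e., if and only if the oriented real 2-plane spanned by (u,v) is a complex line with its complex orientation). -/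
/-
Writing `D(x, y) = re ⟪u, x⟫ re ⟪v, y⟫ - re ⟪u, y⟫ re ⟪v, x⟫`, one has
`D(e, I e) = im (⟪u, e⟫ ⟪e, v⟫)`, so for the unitary basis `(a, b)` Parseval's identity gives
`D(a, I a) + D(b, I b) = im ⟪u, v⟫`. For unit vectors, `‖v - I u‖² = 2 - 2 im ⟪u, v⟫`,
hence `im ⟪u, v⟫ = 1` exactly when `v = I u`.
-/

/-- the real inner product `⟨x,y⟩ = Re ⟨x,y⟩_ℂ` on ℂ². -/
noncomputable def rinner (x y : EuclideanSpace ℂ (Fin 2)) : ℝ :=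
  (inner ℂ x y : ℂ).re

open Complex Module
open scoped InnerProductSpace ComplexConjugate

theorem Orthonormal.sum_inner_mul_inner {𝕜 E ι : Type*} [RCLike 𝕜] [NormedAddCommGroup E]
    [InnerProductSpace 𝕜 E] [Fintype ι] [Nonempty ι] {e : ι → E} (he : Orthonormal 𝕜 e)
    (hcard : Fintype.card ι = finrank 𝕜 E) (x y : E) :
    ∑ i, ⟪x, e i⟫_𝕜 * ⟪e i, y⟫_𝕜 = ⟪x, y⟫_𝕜 := by
  have hB := coe_basisOfOrthonormalOfCardEqFinrank he hcard
  let B := (basisOfOrthonormalOfCardEqFinrank he hcard).toOrthonormalBasis (by rwa [hB])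
  have hBe : ⇑B = e := by simp [B]
  simpa [hBe] using B.sum_inner_mul_inner x y

section

variable {E : Type*} [NormedAddCommGroup E] [InnerProductSpace ℂ E]

theorem re_inner_I_smul_right (x y : E) : re ⟪x, I • y⟫_ℂ = -im ⟪x, y⟫_ℂ := by
  rw [inner_smul_right, I_mul_re]

theorem im_inner_mul_inner (u v e : E) :
    im (⟪u, e⟫_ℂ * ⟪e, v⟫_ℂ) =
      re ⟪u, e⟫_ℂ * re ⟪v, I • e⟫_ℂ - re ⟪u, I • e⟫_ℂ * re ⟪v, e⟫_ℂ := by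
  rw [re_inner_I_smul_right, re_inner_I_smul_right, ← inner_conj_symm e v, mul_im, conj_re,
    conj_im]
  ring

theorem inner_eq_zero_of_re_inner_eq_zero {x y : E} (h : re ⟪x, y⟫_ℂ = 0)
    (hI : re ⟪x, I • y⟫_ℂ = 0) : ⟪x, y⟫_ℂ = 0 :=
  Complex.ext h (by simpa [re_inner_I_smul_right] using hI)

theorem norm_eq_one_of_re_inner_self {x : E} (h : re ⟪x, x⟫_ℂ = 1) : ‖x‖ = 1 := by
  rw [norm_eq_sqrt_re_inner (𝕜 := ℂ), RCLike.re_to_complex, h, Real.sqrt_one]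

theorem norm_sub_I_smul_sq (u v : E) :
    ‖v - I • u‖ ^ 2 = ‖v‖ ^ 2 + ‖u‖ ^ 2 - 2 * im ⟪u, v⟫_ℂ := by
  rw [norm_sub_sq (𝕜 := ℂ), RCLike.re_to_complex, re_inner_I_smul_right, ← inner_conj_symm u v,
    conj_im, norm_smul, norm_I, one_mul]
  ring

theorem im_inner_eq_one_iff {u v : E} (hu : ‖u‖ = 1) (hv : ‖v‖ = 1) :
    im ⟪u, v⟫_ℂ = 1 ↔ v = I • u := by
  have h := norm_sub_I_smul_sq u v
  rw [hu, hv] at h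
  rw [← sub_eq_zero (a := v), ← norm_eq_zero, ← pow_eq_zero_iff two_ne_zero, h]
  constructor <;> intro h' <;> linarith

end

theorem stmt_15_general (u v a b : EuclideanSpace ℂ (Fin 2))
    (hu : rinner u u = 1) (hv : rinner v v = 1)
    (hbasis : ∀ p q : Fin 4,
      rinner (![a, Complex.I • a, b, Complex.I • b] p) (![a, Complex.I • a, b, Complex.I • b] q) =
        if p = q then 1 else 0) :
    ((rinner u a * rinner v (Complex.I • a) - rinner u (Complex.I • a) * rinner v a)
      + (rinner u b * rinner v (Complex.I • b) - rinner u (Complex.I • b) * rinner v b)) = 1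
    ↔ v = Complex.I • u := by
  have hab : ⟪a, b⟫_ℂ = 0 := inner_eq_zero_of_re_inner_eq_zero (hbasis 0 2) (hbasis 0 3)
  have ha : ‖a‖ = 1 := norm_eq_one_of_re_inner_self (hbasis 0 0)
  have hb : ‖b‖ = 1 := norm_eq_one_of_re_inner_self (hbasis 2 2)
  have hON : Orthonormal ℂ ![a, b] := by simp [ha, hb, hab]
  have hParseval := hON.sum_inner_mul_inner (by simp) u v
  simp only [Fin.sum_univ_two, Matrix.cons_val_zero, Matrix.cons_val_one] at hParseval
  simp only [rinner, ← im_inner_mul_inner, ← add_im, hParseval]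
  exact im_inner_eq_one_iff (norm_eq_one_of_re_inner_self hu) (norm_eq_one_of_re_inner_self hv)

theorem stmt_15 (u v a b : EuclideanSpace ℂ (Fin 2))
    (hu : rinner u u = 1) (hv : rinner v v = 1) (huv : rinner u v = 0)
    (hbasis : ∀ p q : Fin 4,
      rinner (![a, Complex.I • a, b, Complex.I • b] p) (![a, Complex.I • a, b, Complex.I • b] q) =
        if p = q then 1 else 0) :
    ((rinner u a * rinner v (Complex.I • a) - rinner u (Complex.I • a) * rinner v a)
      + (rinner u b * rinner v (Complex.I • b) - rinner u (Complex.I • b) * rinner v b)) = 1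
    ↔ v = Complex.I • u :=
  stmt_15_general u v a b hu hv hbasis
end
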